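/- Let P be a finite poset with unique minimal and maximal elements, and fix a nonempty proper order ideal I. Then the number of linear extensions of P equals the sum over all linear extensions L of the number of I-descents of L: |L(P)| = sum_{L} |des_I(L)|. -/

import Mathlib

open scoped Classical
noncomputable section

variable {P : Type*} [Fintype P] [PartialOrder P]

/-- A linear extension of the finite poset `P` with `n` elements: a bijective
labeling by `{1, …, n}` that is strictly order-preserving. -/
def IsLinExt (L : P → ℕ) : Prop :=
  Set.BijOn L Set.univ (Set.Icc 1 (Fintype.card P)) ∧
  ∀ x y : P, x < y → L x < L y

/-- `p` is an `I`-descent of `L`: `p ∈ I` is covered by some `q ∉ I` with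
`L q = L p + 1`. -/
def IDescent (I : Set P) (L : P → ℕ) (p : P) : Prop :=
  p ∈ I ∧ ∃ q : P, q ∉ I ∧ p ⋖ q ∧ L q = L p + 1

/-- Swap the labels `i` and `i+1` in `L`. -/
def swapL (i : ℕ) (L : P → ℕ) : P → ℕ :=
  fun x => if L x = i then i + 1 else if L x = i + 1 then i else L x

/-- `τᵢ`: interchange the elements labeled `i` and `i+1` if the result is again a
linear extension; otherwise do nothing. -/
def tauL (i : ℕ) (L : P → ℕ) : P → ℕ :=
  if IsLinExt (swapL i L) then swapL i L else L

/-- The odd promotion operator `τₒ = ∏_{i odd} τᵢ` on linear extensions. -/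
def tauLO (L : P → ℕ) : P → ℕ :=
  ((List.range' 1 (Fintype.card P - 1)).filter (fun i => i % 2 = 1)).foldl
    (fun s i => tauL i s) L

/-- The even promotion operator `τₑ = ∏_{i even} τᵢ` on linear extensions. -/
def tauLE (L : P → ℕ) : P → ℕ :=
  ((List.range' 1 (Fintype.card P - 1)).filter (fun i => i % 2 = 0)).foldl
    (fun s i => tauL i s) L

/-- The orbit of a linear extension under the dihedral group `⟨τₒ, τₑ⟩`. -/
def OrbitL (L : P → ℕ) : Set (P → ℕ) :=
  {L' | Relation.ReflTransGen (fun a b => b = tauLO a ∨ b = tauLE a) L L'}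

set_option linter.unusedSectionVars false

lemma IsLinExt.inj {L : P → ℕ} (hL : IsLinExt L) : Function.Injective L :=
  fun a b hab => hL.1.injOn (Set.mem_univ a) (Set.mem_univ b) hab

lemma IsLinExt.memIcc {L : P → ℕ} (hL : IsLinExt L) (x : P) :
    1 ≤ L x ∧ L x ≤ Fintype.card P := hL.1.mapsTo (Set.mem_univ x)

lemma IsLinExt.surj {L : P → ℕ} (hL : IsLinExt L) {i : ℕ}
    (h1 : 1 ≤ i) (h2 : i ≤ Fintype.card P) : ∃ x, L x = i := by
  obtain ⟨x, -, hx⟩ := hL.1.surjOn (Set.mem_Icc.mpr ⟨h1, h2⟩)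
  exact ⟨x, hx⟩

lemma IsLinExt.covBy {L : P → ℕ} (hL : IsLinExt L) {x y : P}
    (hxy : L y = L x + 1) (h : x < y) : x ⋖ y := by
  refine ⟨h, fun z hz hz' => ?_⟩
  have h1 := hL.2 _ _ hz
  have h2 := hL.2 _ _ hz'
  omega

lemma IsLinExt.bot_label [OrderBot P] {L : P → ℕ} (hL : IsLinExt L) : L ⊥ = 1 := by
  have : Nonempty P := ⟨⊥⟩
  have hc : 1 ≤ Fintype.card P := Fintype.card_pos
  obtain ⟨x, hx⟩ := hL.surj le_rfl hc
  rcases eq_or_ne x ⊥ with rfl | h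
  · exact hx
  · have hb := hL.2 ⊥ x (Ne.bot_lt' (Ne.symm h))
    have := hL.memIcc ⊥
    omega

lemma IsLinExt.top_label [OrderTop P] {L : P → ℕ} (hL : IsLinExt L) :
    L ⊤ = Fintype.card P := by
  have : Nonempty P := ⟨⊤⟩
  have hc : 1 ≤ Fintype.card P := Fintype.card_pos
  obtain ⟨x, hx⟩ := hL.surj hc le_rfl
  rcases eq_or_ne x ⊤ with rfl | h
  · exact hx
  · have hb := hL.2 x ⊤ (Ne.lt_top h)
    have := hL.memIcc ⊤
    omega

lemma swapL_comp (i : ℕ) (L : P → ℕ) :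
    swapL i L = (Equiv.swap i (i+1)) ∘ L := by
  funext x
  simp [swapL, Equiv.swap_apply_def]

lemma swap_bijOn {i n : ℕ} (h1 : 1 ≤ i) (h2 : i + 1 ≤ n) :
    Set.BijOn (Equiv.swap i (i+1)) (Set.Icc 1 n) (Set.Icc 1 n) := by
  have hmaps : Set.MapsTo (Equiv.swap i (i+1)) (Set.Icc 1 n) (Set.Icc 1 n) := by
    intro j hj
    simp only [Set.mem_Icc, Equiv.swap_apply_def] at hj ⊢
    split_ifs <;> omega
  refine ⟨hmaps, (Equiv.injective _).injOn, fun j hj => ?_⟩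
  exact ⟨Equiv.swap i (i+1) j, hmaps hj, Equiv.swap_apply_self _ _ _⟩

lemma swapL_isLinExt {L : P → ℕ} (hL : IsLinExt L) {i : ℕ} {a b : P}
    (ha : L a = i) (hb : L b = i + 1) (h1 : 1 ≤ i) (h2 : i + 1 ≤ Fintype.card P)
    (hnab : ¬ a < b) : IsLinExt (swapL i L) := by
  constructor
  · rw [swapL_comp]
    exact (swap_bijOn h1 h2).comp hL.1
  · intro x y hxy
    have hxy' := hL.2 _ _ hxy
    by_cases hcase : L x = i ∧ L y = i + 1
    · exact absurd (hL.inj (hcase.1.trans ha.symm) ▸ hL.inj (hcase.2.trans hb.symm) ▸ hxy) hnab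
    · rcases not_and_or.mp hcase with h | h <;>
      · simp only [swapL]
        split_ifs <;> omega

lemma swapL_swapL (i : ℕ) (L : P → ℕ) : swapL i (swapL i L) = L := by
  funext x
  simp only [swapL]
  split_ifs <;> omega

lemma swapL_left {i : ℕ} {L : P → ℕ} {x : P} (h : L x = i) : swapL i L x = i + 1 := by
  simp [swapL, h]

lemma swapL_right {i : ℕ} {L : P → ℕ} {x : P} (h : L x = i + 1) : swapL i L x = i := by
  simp only [swapL, h]
  split_ifs <;> omega


/-- Descent crossing with a cover relation. -/
def DCovP (I : Set P) (L : P → ℕ) (i : ℕ) : Prop :=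
  ∃ x y : P, L x = i ∧ L y = i + 1 ∧ x ∈ I ∧ y ∉ I ∧ x ⋖ y

/-- Descent crossing without a cover relation. -/
def DIncP (I : Set P) (L : P → ℕ) (i : ℕ) : Prop :=
  ∃ x y : P, L x = i ∧ L y = i + 1 ∧ x ∈ I ∧ y ∉ I ∧ ¬ x ⋖ y

/-- Any descent crossing. -/
def DAP (I : Set P) (L : P → ℕ) (i : ℕ) : Prop :=
  ∃ x y : P, L x = i ∧ L y = i + 1 ∧ x ∈ I ∧ y ∉ I

/-- Ascent crossing. -/
def ACP (I : Set P) (L : P → ℕ) (i : ℕ) : Prop :=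
  ∃ x y : P, L x = i ∧ L y = i + 1 ∧ x ∉ I ∧ y ∈ I

lemma card_descents_eq (I : Set P) {L : P → ℕ} (hL : IsLinExt L) :
    (Finset.univ.filter (IDescent I L)).card
      = ((Finset.Icc 1 (Fintype.card P - 1)).filter (DCovP I L)).card := by
  refine Finset.card_bij (fun p _ => L p) ?_ ?_ ?_
  · intro p hp
    simp only [Finset.mem_filter, Finset.mem_univ, true_and] at hp
    obtain ⟨hpI, q, hqI, hcov, hq⟩ := hp
    have h1 := hL.memIcc p
    have h2 := hL.memIcc q
    simp only [Finset.mem_filter, Finset.mem_Icc]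
    exact ⟨⟨h1.1, by omega⟩, p, q, rfl, hq, hpI, hqI, hcov⟩
  · intro a _ b _ hab
    exact hL.inj hab
  · intro i hi
    simp only [Finset.mem_filter, Finset.mem_Icc] at hi
    obtain ⟨-, x, y, hx, hy, hxI, hyI, hcov⟩ := hi
    refine ⟨x, ?_, hx⟩
    simp only [Finset.mem_filter, Finset.mem_univ, true_and]
    exact ⟨hxI, y, hyI, hcov, by omega⟩

lemma card_da_split (I : Set P) {L : P → ℕ} (hL : IsLinExt L) :
    ((Finset.Icc 1 (Fintype.card P - 1)).filter (DAP I L)).card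
      = ((Finset.Icc 1 (Fintype.card P - 1)).filter (DCovP I L)).card
        + ((Finset.Icc 1 (Fintype.card P - 1)).filter (DIncP I L)).card := by
  have hsplit : (Finset.Icc 1 (Fintype.card P - 1)).filter (DAP I L)
      = (Finset.Icc 1 (Fintype.card P - 1)).filter (fun i => DCovP I L i ∨ DIncP I L i) := by
    apply Finset.filter_congr
    intro i _
    constructor
    · rintro ⟨x, y, hx, hy, hxI, hyI⟩
      by_cases hc : x ⋖ y
      · exact Or.inl ⟨x, y, hx, hy, hxI, hyI, hc⟩
      · exact Or.inr ⟨x, y, hx, hy, hxI, hyI, hc⟩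
    · rintro (⟨x, y, hx, hy, hxI, hyI, -⟩ | ⟨x, y, hx, hy, hxI, hyI, -⟩) <;>
        exact ⟨x, y, hx, hy, hxI, hyI⟩
  rw [hsplit, Finset.filter_or, Finset.card_union_of_disjoint]
  rw [Finset.disjoint_left]
  rintro i h1 h2
  simp only [Finset.mem_filter] at h1 h2
  obtain ⟨-, x, y, hx, hy, -, -, hc⟩ := h1
  obtain ⟨-, x', y', hx', hy', -, -, hc'⟩ := h2
  have ex : x' = x := hL.inj (hx'.trans hx.symm)
  have ey : y' = y := hL.inj (hy'.trans hy.symm)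
  rw [ex, ey] at hc'
  exact hc' hc

lemma card_da_eq_ac [OrderBot P] [OrderTop P] {I : Set P}
    (hbotI : (⊥ : P) ∈ I) (htopI : (⊤ : P) ∉ I) {L : P → ℕ} (hL : IsLinExt L)
    (hn2 : 2 ≤ Fintype.card P) :
    ((Finset.Icc 1 (Fintype.card P - 1)).filter (DAP I L)).card
      = ((Finset.Icc 1 (Fintype.card P - 1)).filter (ACP I L)).card + 1 := by
  set n := Fintype.card P with hn
  set χ : ℕ → ℤ := fun i => if ∃ x, L x = i ∧ x ∈ I then 1 else 0 with hχ
  have key : ∀ i ∈ Finset.Icc 1 (n - 1),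
      χ i - χ (i + 1) = (if DAP I L i then (1 : ℤ) else 0) - (if ACP I L i then 1 else 0) := by
    intro i hi
    rw [Finset.mem_Icc] at hi
    obtain ⟨x, hx⟩ := hL.surj hi.1 (by omega)
    obtain ⟨y, hy⟩ := hL.surj (by omega : 1 ≤ i + 1) (by omega)
    have e1 : (∃ z, L z = i ∧ z ∈ I) ↔ x ∈ I :=
      ⟨fun ⟨z, hz, hzI⟩ => hL.inj (hz.trans hx.symm) ▸ hzI, fun h => ⟨x, hx, h⟩⟩
    have e2 : (∃ z, L z = i + 1 ∧ z ∈ I) ↔ y ∈ I :=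
      ⟨fun ⟨z, hz, hzI⟩ => hL.inj (hz.trans hy.symm) ▸ hzI, fun h => ⟨y, hy, h⟩⟩
    have e3 : DAP I L i ↔ (x ∈ I ∧ y ∉ I) := by
      constructor
      · rintro ⟨x', y', hx', hy', hxI, hyI⟩
        rw [← hL.inj (hx'.trans hx.symm), ← hL.inj (hy'.trans hy.symm)]
        exact ⟨hxI, hyI⟩
      · rintro ⟨h1, h2⟩; exact ⟨x, y, hx, hy, h1, h2⟩
    have e4 : ACP I L i ↔ (x ∉ I ∧ y ∈ I) := by
      constructor
      · rintro ⟨x', y', hx', hy', hxI, hyI⟩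
        rw [← hL.inj (hx'.trans hx.symm), ← hL.inj (hy'.trans hy.symm)]
        exact ⟨hxI, hyI⟩
      · rintro ⟨h1, h2⟩; exact ⟨x, y, hx, hy, h1, h2⟩
    simp only [hχ, e1, e2, e3, e4]
    by_cases hxI : x ∈ I <;> by_cases hyI : y ∈ I <;> simp [hxI, hyI]
  have tele : ∑ i ∈ Finset.Icc 1 (n - 1), (χ i - χ (i + 1)) = χ 1 - χ n := by
    have h1 : Finset.Icc 1 (n - 1) = Finset.Ico 1 n := by
      ext j; simp [Finset.mem_Icc, Finset.mem_Ico]; omega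
    rw [h1, Finset.sum_Ico_eq_sum_range]
    have h2 := Finset.sum_range_sub' (fun j => χ (1 + j)) (n - 1)
    simp only [Nat.add_assoc] at h2 ⊢
    rw [h2]
    have e1 : 1 + (n - 1) = n := by omega
    rw [e1]
  have hχ1 : χ 1 = 1 := by
    rw [hχ]
    exact if_pos ⟨⊥, hL.bot_label, hbotI⟩
  have hχn : χ n = 0 := by
    rw [hχ]
    refine if_neg ?_
    rintro ⟨x, hx, hxI⟩
    exact htopI (hL.inj (hL.top_label.trans hx.symm) ▸ hxI)
  have hsum : ∑ i ∈ Finset.Icc 1 (n - 1),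
      ((if DAP I L i then (1 : ℤ) else 0) - (if ACP I L i then 1 else 0)) = 1 := by
    rw [← Finset.sum_congr rfl key, tele, hχ1, hχn]
    ring
  rw [Finset.sum_sub_distrib, Finset.sum_boole, Finset.sum_boole] at hsum
  have h1 : (((Finset.Icc 1 (n - 1)).filter (DAP I L)).card : ℤ)
      - ((Finset.Icc 1 (n - 1)).filter (ACP I L)).card = 1 := hsum
  omega

lemma swap_dinc {I : Set P} {L : P → ℕ} (hL : IsLinExt L) {i : ℕ}
    (h1 : 1 ≤ i) (h2 : i + 1 ≤ Fintype.card P) (hd : DIncP I L i) :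
    IsLinExt (swapL i L) ∧ ACP I (swapL i L) i := by
  obtain ⟨x, y, hx, hy, hxI, hyI, hc⟩ := hd
  have hnxy : ¬ x < y := fun h => hc (hL.covBy (by omega) h)
  have hlin : IsLinExt (swapL i L) := swapL_isLinExt hL hx hy h1 h2 hnxy
  exact ⟨hlin, y, x, swapL_right hy, swapL_left hx, hyI, hxI⟩

lemma swap_ac {I : Set P} (hI : IsLowerSet I) {L : P → ℕ} (hL : IsLinExt L) {i : ℕ}
    (h1 : 1 ≤ i) (h2 : i + 1 ≤ Fintype.card P) (hd : ACP I L i) :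
    IsLinExt (swapL i L) ∧ DIncP I (swapL i L) i := by
  obtain ⟨x, y, hx, hy, hxI, hyI⟩ := hd
  have hnxy : ¬ x < y := fun h => hxI (hI h.le hyI)
  have hlin : IsLinExt (swapL i L) := swapL_isLinExt hL hx hy h1 h2 hnxy
  refine ⟨hlin, y, x, swapL_right hy, swapL_left hx, hyI, hxI, ?_⟩
  intro hcov
  have := hL.2 _ _ hcov.lt
  omega

/-- For a finite poset `P` with unique minimal and maximal elements and a nonempty
proper order ideal `I`, the number of linear extensions of `P` equals the total
number of `I`-descents over all linear extensions:
`|𝓛(P)| = ∑_L |des_I(L)|`. -/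
theorem card_linext_eq_sum_descents {P : Type*} [Fintype P] [PartialOrder P]
    [OrderBot P] [OrderTop P]
    (I : Set P) (hI : IsLowerSet I) (hne : I.Nonempty) (hproper : I ≠ Set.univ) :
    {L : P → ℕ | IsLinExt L}.ncard
      = {pl : P × (P → ℕ) | IsLinExt pl.2 ∧ IDescent I pl.2 pl.1}.ncard := by
  classical
  set n := Fintype.card P with hn
  have hbotI : (⊥ : P) ∈ I := by obtain ⟨p, hp⟩ := hne; exact hI bot_le hp
  have htopI : (⊤ : P) ∉ I := fun h => hproper (Set.eq_univ_of_forall fun x => hI le_top h)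
  have hbt : (⊥ : P) ≠ ⊤ := fun h => htopI (h ▸ hbotI)
  have hnt : Nontrivial P := ⟨⊥, ⊤, hbt⟩
  have hn2 : 2 ≤ n := Fintype.one_lt_card
  -- finiteness of the set of linear extensions
  have hfin : {L : P → ℕ | IsLinExt L}.Finite := by
    apply Set.Finite.subset (Set.Finite.pi (fun _ : P => Set.finite_Icc 1 n))
    intro L hL
    rw [Set.mem_pi]
    intro x _
    exact Set.mem_Icc.mpr (hL.memIcc x)
  set LF : Finset (P → ℕ) := hfin.toFinset with hLF
  have hmemLF : ∀ L, L ∈ LF ↔ IsLinExt L := fun L => by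
    rw [hLF, Set.Finite.mem_toFinset]; rfl
  -- the descent pair set as a Finset
  set DF : Finset (P × (P → ℕ)) :=
    LF.biUnion (fun L => (Finset.univ.filter (IDescent I L)).image (fun p => (p, L)))
    with hDF
  have hDFset : {pl : P × (P → ℕ) | IsLinExt pl.2 ∧ IDescent I pl.2 pl.1} = ↑DF := by
    ext ⟨p, L⟩
    simp only [Set.mem_setOf_eq, Finset.coe_biUnion, Set.mem_iUnion, Finset.mem_coe,
      Finset.mem_biUnion, hDF, Finset.mem_image, Finset.mem_filter, Finset.mem_univ, true_and]
    constructor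
    · rintro ⟨h1, h2⟩
      exact ⟨L, (hmemLF L).mpr h1, p, h2, rfl⟩
    · rintro ⟨M, hM, q, hq, heq⟩
      obtain ⟨rfl, rfl⟩ : q = p ∧ M = L := by
        constructor <;> [exact congrArg Prod.fst heq; exact congrArg Prod.snd heq]
      exact ⟨(hmemLF M).mp hM, hq⟩
  have hDFcard : DF.card = ∑ L ∈ LF, (Finset.univ.filter (IDescent I L)).card := by
    rw [hDF, Finset.card_biUnion]
    · exact Finset.sum_congr rfl fun L _ =>
        Finset.card_image_of_injective _ (fun a b h => congrArg Prod.fst h)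
    · intro L1 _ L2 _ hne12
      rw [Function.onFun, Finset.disjoint_left]
      rintro ⟨q, M⟩ hm1 hm2
      simp only [Finset.mem_image] at hm1 hm2
      obtain ⟨a, -, ha⟩ := hm1
      obtain ⟨b, -, hb⟩ := hm2
      exact hne12 ((congrArg Prod.snd ha).trans (congrArg Prod.snd hb).symm)
  -- the swap correspondence: incomparable descent crossings ↔ ascent crossings
  set BF : Finset ((P → ℕ) × ℕ) :=
    LF.biUnion (fun L => ((Finset.Icc 1 (n - 1)).filter (DIncP I L)).image (fun i => (L, i)))
    with hBF
  set CF : Finset ((P → ℕ) × ℕ) :=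
    LF.biUnion (fun L => ((Finset.Icc 1 (n - 1)).filter (ACP I L)).image (fun i => (L, i)))
    with hCF
  have hdisj : ∀ (f : (P → ℕ) → Finset ℕ), ∀ L1 ∈ LF, ∀ L2 ∈ LF, L1 ≠ L2 →
      Disjoint ((f L1).image (fun i => (L1, i))) ((f L2).image (fun i => (L2, i))) := by
    intro f L1 _ L2 _ hne12
    rw [Finset.disjoint_left]
    rintro ⟨M, j⟩ hm1 hm2
    simp only [Finset.mem_image] at hm1 hm2
    obtain ⟨a, -, ha⟩ := hm1
    obtain ⟨b, -, hb⟩ := hm2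
    exact hne12 ((congrArg Prod.fst ha).trans (congrArg Prod.fst hb).symm)
  have hBFcard : BF.card = ∑ L ∈ LF, ((Finset.Icc 1 (n - 1)).filter (DIncP I L)).card := by
    rw [hBF, Finset.card_biUnion (hdisj _)]
    exact Finset.sum_congr rfl fun L _ =>
      Finset.card_image_of_injective _ (fun a b h => congrArg Prod.snd h)
  have hCFcard : CF.card = ∑ L ∈ LF, ((Finset.Icc 1 (n - 1)).filter (ACP I L)).card := by
    rw [hCF, Finset.card_biUnion (hdisj _)]
    exact Finset.sum_congr rfl fun L _ =>
      Finset.card_image_of_injective _ (fun a b h => congrArg Prod.snd h)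
  -- membership characterizations
  have hmemBF : ∀ L i, (L, i) ∈ BF ↔ IsLinExt L ∧ i ∈ Finset.Icc 1 (n - 1) ∧ DIncP I L i := by
    intro L i
    simp only [hBF, Finset.mem_biUnion, Finset.mem_image, Finset.mem_filter]
    constructor
    · rintro ⟨M, hM, j, ⟨hj1, hj2⟩, heq⟩
      obtain ⟨rfl, rfl⟩ : M = L ∧ j = i :=
        ⟨congrArg Prod.fst heq, congrArg Prod.snd heq⟩
      exact ⟨(hmemLF M).mp hM, hj1, hj2⟩
    · rintro ⟨h1, h2, h3⟩
      exact ⟨L, (hmemLF L).mpr h1, i, ⟨h2, h3⟩, rfl⟩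
  have hmemCF : ∀ L i, (L, i) ∈ CF ↔ IsLinExt L ∧ i ∈ Finset.Icc 1 (n - 1) ∧ ACP I L i := by
    intro L i
    simp only [hCF, Finset.mem_biUnion, Finset.mem_image, Finset.mem_filter]
    constructor
    · rintro ⟨M, hM, j, ⟨hj1, hj2⟩, heq⟩
      obtain ⟨rfl, rfl⟩ : M = L ∧ j = i :=
        ⟨congrArg Prod.fst heq, congrArg Prod.snd heq⟩
      exact ⟨(hmemLF M).mp hM, hj1, hj2⟩
    · rintro ⟨h1, h2, h3⟩
      exact ⟨L, (hmemLF L).mpr h1, i, ⟨h2, h3⟩, rfl⟩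
  have hBCcard : BF.card = CF.card := by
    refine Finset.card_bij' (fun p _ => (swapL p.2 p.1, p.2))
      (fun p _ => (swapL p.2 p.1, p.2)) ?_ ?_ ?_ ?_
    · rintro ⟨L, i⟩ hm
      obtain ⟨hL, hi, hd⟩ := (hmemBF L i).mp hm
      rw [Finset.mem_Icc] at hi
      obtain ⟨hlin, hac⟩ := swap_dinc hL hi.1 (by omega) hd
      exact (hmemCF _ _).mpr ⟨hlin, Finset.mem_Icc.mpr hi, hac⟩
    · rintro ⟨L, i⟩ hm
      obtain ⟨hL, hi, hd⟩ := (hmemCF L i).mp hm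
      rw [Finset.mem_Icc] at hi
      obtain ⟨hlin, hdi⟩ := swap_ac hI hL hi.1 (by omega) hd
      exact (hmemBF _ _).mpr ⟨hlin, Finset.mem_Icc.mpr hi, hdi⟩
    · rintro ⟨L, i⟩ _
      simp only [swapL_swapL]
    · rintro ⟨L, i⟩ _
      simp only [swapL_swapL]
  -- pointwise counting identity, summed over LF
  have hpoint : ∀ L ∈ LF,
      (Finset.univ.filter (IDescent I L)).card
        + ((Finset.Icc 1 (n - 1)).filter (DIncP I L)).card
      = ((Finset.Icc 1 (n - 1)).filter (ACP I L)).card + 1 := by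
    intro L hL
    have h := (hmemLF L).mp hL
    rw [card_descents_eq I h, ← card_da_split I h, card_da_eq_ac hbotI htopI h hn2]
  have hsumpoint : (∑ L ∈ LF, (Finset.univ.filter (IDescent I L)).card)
        + ∑ L ∈ LF, ((Finset.Icc 1 (n - 1)).filter (DIncP I L)).card
      = (∑ L ∈ LF, ((Finset.Icc 1 (n - 1)).filter (ACP I L)).card) + LF.card := by
    rw [← Finset.sum_add_distrib, Finset.sum_congr rfl hpoint, Finset.sum_add_distrib,
      Finset.sum_const, smul_eq_mul, mul_one]
  have hmain : LF.card = ∑ L ∈ LF, (Finset.univ.filter (IDescent I L)).card := by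
    rw [← hBFcard, ← hCFcard] at hsumpoint
    omega
  have hL1 : {L : P → ℕ | IsLinExt L}.ncard = LF.card := by
    rw [hLF, ← Set.ncard_coe_finset, Set.Finite.coe_toFinset]
  rw [hL1, hDFset, Set.ncard_coe_finset, hDFcard, hmain]
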